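/- arXiv:2109.12716 — 2 statements merged into one kernel-verified Lean document; each statement's English description precedes it below -/
import Mathlib

section
/- Let M_G = max over matchings m of H(m) be the ground state energy of the matching model on a finite graph G with vertex partition A ∪ B and bridging edges E_k. Let M_A, M_B be the ground state energies on the induced subgraphs. Then 0 ≤ M_G − M_A − M_B ≤ Σ_{e=(u,v) ∈ E_k} max(ω_e − ν_u − ν_v, 0). -/
open Finset
open scoped Classical

variable {V : Type*}

/-- `m` is a matching of `G` using only vertices in `S`: a set of edges of `G`,
all of whose endpoints lie in `S`, that are pairwise vertex-disjoint. -/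
def IsMatchingOn (G : SimpleGraph V) (S : Finset V) (m : Finset (Sym2 V)) : Prop :=
  (∀ e ∈ m, e ∈ G.edgeSet ∧ ∀ v ∈ e, v ∈ S) ∧
  ∀ e ∈ m, ∀ f ∈ m, e ≠ f → ∀ v ∈ e, v ∉ f

/-- The Hamiltonian `H(m) = Σ_{v ∈ S uncovered} ν v + Σ_{e ∈ m} ω e`. -/
noncomputable def Ham (ν : V → ℝ) (ω : Sym2 V → ℝ) (S : Finset V)
    (m : Finset (Sym2 V)) : ℝ :=
  (∑ v ∈ S.filter (fun v => ∀ e ∈ m, v ∉ e), ν v) + ∑ e ∈ m, ω e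

/-- The matching partition function on the induced subgraph on `S`. -/
noncomputable def Zfun [Fintype V] [DecidableEq V] (G : SimpleGraph V) (ν : V → ℝ)
    (ω : Sym2 V → ℝ) (S : Finset V) : ℝ :=
  ∑ m ∈ Finset.univ.filter (fun m : Finset (Sym2 V) => IsMatchingOn G S m),
    Real.exp (Ham ν ω S m)

/-- The ground state energy: the maximal value of the Hamiltonian over all matchings
on the induced subgraph on `S`. -/
noncomputable def GSE (G : SimpleGraph V) (ν : V → ℝ) (ω : Sym2 V → ℝ)
    (S : Finset V) : ℝ :=
  sSup {x : ℝ | ∃ m, IsMatchingOn G S m ∧ x = Ham ν ω S m}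

/-!
Writing `H(m) = Σ_{v ∈ S} ν v + Σ_{s(u, v) ∈ m} (ω s(u, v) − ν u − ν v)` for a matching `m`
on `S` turns both bounds into bookkeeping over edges. Optimal matchings of `A` and `B` together
form a matching of `A ∪ B` with energy `M_A + M_B`. Conversely an optimal matching of `A ∪ B`
splits into a matching of `A`, a matching of `B` and a set of bridging dimers, each contributing
at most `(ω s(u, v) − ν u − ν v)₊`.
-/

section
variable {G : SimpleGraph V} {S T A B : Finset V} {m m' mA mB : Finset (Sym2 V)}

lemma IsMatchingOn.subset_sym2 (hm : IsMatchingOn G S m) : m ⊆ S.sym2 :=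
  fun e he => Finset.mem_sym2_iff.2 (hm.1 e he).2

lemma IsMatchingOn.mono (hm : IsMatchingOn G S m) (hsub : m' ⊆ m)
    (hT : ∀ e ∈ m', ∀ v ∈ e, v ∈ T) : IsMatchingOn G T m' :=
  ⟨fun e he => ⟨(hm.1 e (hsub he)).1, hT e he⟩,
    fun e he f hf => hm.2 e (hsub he) f (hsub hf)⟩

lemma IsMatchingOn.disjoint (hA : IsMatchingOn G A mA) (hB : IsMatchingOn G B mB)
    (hAB : Disjoint A B) : Disjoint mA mB :=
  Finset.disjoint_left.2 fun e heA heB =>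
    Finset.disjoint_left.1 hAB ((hA.1 e heA).2 _ (Sym2.out_fst_mem e))
      ((hB.1 e heB).2 _ (Sym2.out_fst_mem e))

lemma IsMatchingOn.union [DecidableEq V] (hA : IsMatchingOn G A mA)
    (hB : IsMatchingOn G B mB) (hAB : Disjoint A B) :
    IsMatchingOn G (A ∪ B) (mA ∪ mB) := by
  refine ⟨fun e he => ?_, fun e he f hf hef v hve hvf => ?_⟩
  · rcases Finset.mem_union.1 he with he | he
    · exact ⟨(hA.1 e he).1, fun v hv => Finset.mem_union_left _ ((hA.1 e he).2 v hv)⟩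
    · exact ⟨(hB.1 e he).1, fun v hv => Finset.mem_union_right _ ((hB.1 e he).2 v hv)⟩
  rcases Finset.mem_union.1 he with he | he <;> rcases Finset.mem_union.1 hf with hf | hf
  · exact hA.2 e he f hf hef v hve hvf
  · exact Finset.disjoint_left.1 hAB ((hA.1 e he).2 v hve) ((hB.1 f hf).2 v hvf)
  · exact Finset.disjoint_left.1 hAB ((hA.1 f hf).2 v hvf) ((hB.1 e he).2 v hve)
  · exact hB.2 e he f hf hef v hve hvf

variable (G S) in
lemma finite_setOf_isMatchingOn : {m | IsMatchingOn G S m}.Finite :=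
  S.sym2.powerset.finite_toSet.subset fun _ hm => Finset.mem_powerset.2 hm.subset_sym2

variable (ν : V → ℝ) (ω : Sym2 V → ℝ)

lemma GSE_eq_sSup_image : GSE G ν ω S = sSup (Ham ν ω S '' {m | IsMatchingOn G S m}) := by
  simp only [GSE, Set.image, Set.mem_ofPred_eq, eq_comm]

lemma ham_le_GSE (hm : IsMatchingOn G S m) : Ham ν ω S m ≤ GSE G ν ω S :=
  GSE_eq_sSup_image (G := G) ν ω ▸
    le_csSup ((finite_setOf_isMatchingOn G S).image _).bddAbove ⟨m, hm, rfl⟩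

variable (G S) in
lemma exists_isMatchingOn_GSE_eq : ∃ m, IsMatchingOn G S m ∧ GSE G ν ω S = Ham ν ω S m := by
  obtain ⟨m, hm, hmax⟩ := (Set.Nonempty.image (Ham ν ω S) ⟨∅, by simp [IsMatchingOn]⟩).csSup_mem
    ((finite_setOf_isMatchingOn G S).image _)
  exact ⟨m, hm, by rw [GSE_eq_sSup_image, hmax]⟩

variable [DecidableEq V]

def edgeGain (e : Sym2 V) : ℝ := ω e - ∑ v ∈ e.toFinset, ν v

lemma edgeGain_mk {u v : V} (h : u ≠ v) : edgeGain ν ω s(u, v) = ω s(u, v) - ν u - ν v := by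
  rw [edgeGain, Sym2.toFinset_mk_eq, Finset.sum_pair h, sub_add_eq_sub_sub]

lemma IsMatchingOn.ham_eq (hm : IsMatchingOn G S m) :
    Ham ν ω S m = ∑ v ∈ S, ν v + ∑ e ∈ m, edgeGain ν ω e := by
  have hcovered : S.filter (fun v => ¬ ∀ e ∈ m, v ∉ e) = m.biUnion Sym2.toFinset := by
    ext v
    simp only [Finset.mem_filter, Finset.mem_biUnion, Sym2.mem_toFinset, not_forall, not_not]
    exact ⟨fun ⟨_, e, he, hv⟩ => ⟨e, he, hv⟩, fun ⟨e, he, hv⟩ => ⟨(hm.1 e he).2 v hv, e, he, hv⟩⟩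
  have hdisj : (m : Set (Sym2 V)).PairwiseDisjoint Sym2.toFinset := fun e he f hf hef =>
    Finset.disjoint_left.2 fun v hve hvf =>
      hm.2 e he f hf hef v (Sym2.mem_toFinset.1 hve) (Sym2.mem_toFinset.1 hvf)
  rw [Ham, ← Finset.sum_filter_add_sum_filter_not S (fun v => ∀ e ∈ m, v ∉ e), hcovered,
    Finset.sum_biUnion hdisj]
  simp only [edgeGain, Finset.sum_sub_distrib]
  rw [add_add_sub_cancel]
  -- the filter in `Ham` decides membership classically, the one above via `DecidableEq V`
  congr

lemma ham_union (hA : IsMatchingOn G A mA) (hB : IsMatchingOn G B mB) (hAB : Disjoint A B) :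
    Ham ν ω (A ∪ B) (mA ∪ mB) = Ham ν ω A mA + Ham ν ω B mB := by
  rw [(hA.union hB hAB).ham_eq, hA.ham_eq, hB.ham_eq, Finset.sum_union hAB,
    Finset.sum_union (hA.disjoint hB hAB)]
  ring

variable (G) in
lemma GSE_add_GSE_le_GSE_union (hAB : Disjoint A B) :
    GSE G ν ω A + GSE G ν ω B ≤ GSE G ν ω (A ∪ B) := by
  obtain ⟨mA, hA, hGA⟩ := exists_isMatchingOn_GSE_eq G A ν ω
  obtain ⟨mB, hB, hGB⟩ := exists_isMatchingOn_GSE_eq G B ν ω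
  rw [hGA, hGB, ← ham_union ν ω hA hB hAB]
  exact ham_le_GSE ν ω (hA.union hB hAB)

lemma exists_mk_eq_of_crossing {e : Sym2 V} (he : ∀ v ∈ e, v ∈ A ∪ B)
    (hnA : ¬ ∀ v ∈ e, v ∈ A) (hnB : ¬ ∀ v ∈ e, v ∈ B) : ∃ a ∈ A, ∃ b ∈ B, s(a, b) = e := by
  induction e using Sym2.ind with
  | _ x y =>
    simp only [Sym2.mem_iff, forall_eq_or_imp, forall_eq, Finset.mem_union] at he hnA hnB
    rcases he with ⟨hx | hx, hy | hy⟩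
    · exact absurd ⟨hx, hy⟩ hnA
    · exact ⟨x, hx, y, hy, rfl⟩
    · exact ⟨y, hy, x, hx, Sym2.eq_swap⟩
    · exact absurd ⟨hx, hy⟩ hnB

lemma sum_edgeGain_le_sum_bridges (hAB : Disjoint A B) {K : Finset (Sym2 V)}
    (hKG : ∀ e ∈ K, e ∈ G.edgeSet) (hK : ∀ e ∈ K, ∃ a ∈ A, ∃ b ∈ B, s(a, b) = e) :
    ∑ e ∈ K, edgeGain ν ω e ≤
      ∑ u ∈ A, ∑ v ∈ B, (if G.Adj u v then max (ω s(u, v) - ν u - ν v) 0 else 0) := by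
  let P := (A ×ˢ B).filter fun p => s(p.1, p.2) ∈ K
  have hPK : P.image (fun p => s(p.1, p.2)) = K := by
    ext e
    simp only [P, Finset.mem_image, Finset.mem_filter, Finset.mem_product, Prod.exists]
    refine ⟨fun ⟨_, _, ⟨_, he⟩, hpe⟩ => hpe ▸ he, fun he => ?_⟩
    obtain ⟨a, ha, b, hb, rfl⟩ := hK e he
    exact ⟨a, b, ⟨⟨ha, hb⟩, he⟩, rfl⟩
  have hinj : Set.InjOn (fun p : V × V => s(p.1, p.2)) P := by
    rintro ⟨a, b⟩ hp ⟨a', b'⟩ hp' h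
    simp only [P, Finset.coe_filter, Finset.mem_product, Set.mem_ofPred_eq] at hp hp'
    rcases Sym2.eq_iff.1 h with ⟨rfl, rfl⟩ | ⟨rfl, -⟩
    · rfl
    · exact absurd hp'.1.2 (Finset.disjoint_left.1 hAB hp.1.1)
  calc ∑ e ∈ K, edgeGain ν ω e
      = ∑ p ∈ P, edgeGain ν ω s(p.1, p.2) := by rw [← hPK, Finset.sum_image hinj]
    _ ≤ ∑ p ∈ P, (if G.Adj p.1 p.2 then max (ω s(p.1, p.2) - ν p.1 - ν p.2) 0 else 0) := by
        refine Finset.sum_le_sum fun p hp => ?_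
        have hadj : G.Adj p.1 p.2 := hKG _ (Finset.mem_filter.1 hp).2
        rw [if_pos hadj, edgeGain_mk ν ω hadj.ne]
        exact le_max_left _ _
    _ ≤ ∑ p ∈ A ×ˢ B, (if G.Adj p.1 p.2 then max (ω s(p.1, p.2) - ν p.1 - ν p.2) 0 else 0) :=
        Finset.sum_le_sum_of_subset_of_nonneg (Finset.filter_subset _ _) fun _ _ _ => by
          split_ifs <;> simp
    _ = _ := Finset.sum_product _ _ _

variable (G) in
lemma GSE_union_le (hAB : Disjoint A B) :
    GSE G ν ω (A ∪ B) ≤ GSE G ν ω A + GSE G ν ω B +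
      ∑ u ∈ A, ∑ v ∈ B, (if G.Adj u v then max (ω s(u, v) - ν u - ν v) 0 else 0) := by
  obtain ⟨m, hm, hGm⟩ := exists_isMatchingOn_GSE_eq G (A ∪ B) ν ω
  let inA (e : Sym2 V) : Prop := ∀ v ∈ e, v ∈ A
  let inB (e : Sym2 V) : Prop := ∀ v ∈ e, v ∈ B
  set mA := m.filter inA
  set mB := (m.filter (¬ inA ·)).filter inB
  set K := (m.filter (¬ inA ·)).filter (¬ inB ·)
  have hmA : IsMatchingOn G A mA :=
    hm.mono (Finset.filter_subset _ _) fun e he => (Finset.mem_filter.1 he).2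
  have hmB : IsMatchingOn G B mB :=
    hm.mono ((Finset.filter_subset _ _).trans (Finset.filter_subset _ _))
      fun e he => (Finset.mem_filter.1 he).2
  have hKm : K ⊆ m := (Finset.filter_subset _ _).trans (Finset.filter_subset _ _)
  have hK : ∀ e ∈ K, ∃ a ∈ A, ∃ b ∈ B, s(a, b) = e := by
    intro e he
    simp only [K, Finset.mem_filter] at he
    exact exists_mk_eq_of_crossing (hm.1 e he.1.1).2 he.1.2 he.2
  have hsplit : ∑ e ∈ m, edgeGain ν ω e =
      ∑ e ∈ mA, edgeGain ν ω e + ∑ e ∈ mB, edgeGain ν ω e + ∑ e ∈ K, edgeGain ν ω e := by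
    rw [← Finset.sum_filter_add_sum_filter_not m inA,
      ← Finset.sum_filter_add_sum_filter_not (m.filter (¬ inA ·)) inB]
    ring
  calc GSE G ν ω (A ∪ B)
      = (∑ v ∈ A, ν v + ∑ e ∈ mA, edgeGain ν ω e) + (∑ v ∈ B, ν v + ∑ e ∈ mB, edgeGain ν ω e) +
          ∑ e ∈ K, edgeGain ν ω e := by
        rw [hGm, hm.ham_eq, Finset.sum_union hAB, hsplit]; ring
    _ = Ham ν ω A mA + Ham ν ω B mB + ∑ e ∈ K, edgeGain ν ω e := by
        rw [hmA.ham_eq, hmB.ham_eq]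
    _ ≤ _ := by
        gcongr
        · exact ham_le_GSE ν ω hmA
        · exact ham_le_GSE ν ω hmB
        · exact sum_edgeGain_le_sum_bridges ν ω hAB (fun e he => (hm.1 e (hKm he)).1) hK

end

/-- Cutting bound for the ground state energy: with vertex partition `A ∪ B`,
`0 ≤ M_G − M_A − M_B ≤ Σ_{bridging (u,v)} (ω_{uv} − ν_u − ν_v)₊`. -/
theorem GSE_cut_bound [Fintype V] [DecidableEq V] (G : SimpleGraph V)
    (ν : V → ℝ) (ω : Sym2 V → ℝ) (A B : Finset V)
    (hdisj : Disjoint A B) (hcover : A ∪ B = Finset.univ) :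
    (0 ≤ GSE G ν ω Finset.univ - GSE G ν ω A - GSE G ν ω B) ∧
    (GSE G ν ω Finset.univ - GSE G ν ω A - GSE G ν ω B ≤
      ∑ u ∈ A, ∑ v ∈ B, (if G.Adj u v then
        max (ω s(u, v) - ν u - ν v) 0 else 0)) := by
  rw [← hcover]
  exact ⟨by linarith [GSE_add_GSE_le_GSE_union G ν ω hdisj],
    by linarith [GSE_union_le G ν ω hdisj]⟩
end

section
/- Let A_n be the n×n tridiagonal complex matrix with diagonal entries i·e^{ν_k} (k = 1,…,n) and off-diagonal entries (A_n)_{k,k+1} = (A_n)_{k+1,k} = e^{ω_k/2}. Then |det A_n| = Z_n, where Z_n = Σ_{m matching of the path graph on n vertices} exp(Σ_{k ∉ m} ν_k + Σ_{(k,k+1) ∈ m} ω_k). -/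
open Finset
open scoped Classical

variable {V : Type*}

/-! Both sides satisfy the same three-term recursion along the path. Expanding the leading
`k × k` minor `D k` of `A` along its last row gives
`D (k + 2) = i e^{ν (k+1)} D (k + 1) - e^{ω (k,k+1)} D k`, while sorting the matchings of the first
`k + 2` vertices by whether the last vertex is uncovered or matched to its only neighbour gives
`Z (k + 2) = e^{ν (k+1)} Z (k + 1) + e^{ω (k,k+1)} Z k`. As `i² = -1`, induction yields
`D k = i ^ k Z k`, and `k = n` gives the theorem. -/

namespace Matrix
variable {R : Type*} [CommRing R] {k : ℕ}

theorem det_eq_of_last_row_col_eq_zero (M : Matrix (Fin (k + 2)) (Fin (k + 2)) R)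
    (hrow : ∀ j : Fin k, M (Fin.last _) j.castSucc.castSucc = 0)
    (hcol : ∀ i : Fin k, M i.castSucc.castSucc (Fin.last _) = 0) :
    M.det = M (Fin.last _) (Fin.last _) * (M.submatrix Fin.castSucc Fin.castSucc).det
      - M (Fin.last _) (Fin.last k).castSucc * M (Fin.last k).castSucc (Fin.last _) *
        (M.submatrix (Fin.castSucc ∘ Fin.castSucc) (Fin.castSucc ∘ Fin.castSucc)).det := by
  have hcols : (Fin.last k).castSucc.succAbove ∘ Fin.castSucc = Fin.castSucc ∘ Fin.castSucc :=
    funext fun j => Fin.succAbove_of_castSucc_lt _ _ (by simp [Fin.castSucc_lt_last])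
  have hminor : (M.submatrix Fin.castSucc (Fin.last k).castSucc.succAbove).det =
      M (Fin.last k).castSucc (Fin.last _) *
        (M.submatrix (Fin.castSucc ∘ Fin.castSucc) (Fin.castSucc ∘ Fin.castSucc)).det := by
    rw [det_succ_column _ (Fin.last k), Fin.sum_univ_castSucc]
    simp [hcol, hcols]
  rw [det_succ_row M (Fin.last _), Fin.sum_univ_castSucc, Fin.sum_univ_castSucc]
  simp [hrow, hminor]
  ring

def leadingMinor {n : ℕ} (A : Matrix (Fin n) (Fin n) R) (k : ℕ) (h : k ≤ n) : R :=
  (A.submatrix (Fin.castLE h) (Fin.castLE h)).det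

theorem leadingMinor_self {n : ℕ} (A : Matrix (Fin n) (Fin n) R) :
    A.leadingMinor n le_rfl = A.det :=
  rfl

theorem leadingMinor_add_two {n : ℕ} (A : Matrix (Fin n) (Fin n) R)
    (hA : ∀ i j, i ≠ j → ¬ (SimpleGraph.pathGraph n).Adj i j → A i j = 0) (h : k + 2 ≤ n) :
    A.leadingMinor (k + 2) h = A ⟨k + 1, h⟩ ⟨k + 1, h⟩ * A.leadingMinor (k + 1) (by omega)
      - A ⟨k + 1, h⟩ ⟨k, by omega⟩ * A ⟨k, by omega⟩ ⟨k + 1, h⟩ * A.leadingMinor k (by omega) := by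
  have hfar : ∀ i j : Fin n, (i : ℕ) + 1 < j → A i j = 0 ∧ A j i = 0 := fun i j hij =>
    ⟨hA i j (by omega) (by simp [SimpleGraph.pathGraph_adj]; omega),
      hA j i (by omega) (by simp [SimpleGraph.pathGraph_adj]; omega)⟩
  exact det_eq_of_last_row_col_eq_zero (A.submatrix (Fin.castLE h) (Fin.castLE h))
    (fun j => (hfar (Fin.castLE h j.castSucc.castSucc) ⟨k + 1, h⟩ (by simp)).2)
    (fun i => (hfar (Fin.castLE h i.castSucc.castSucc) ⟨k + 1, h⟩ (by simp)).1)

end Matrix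

section Matching
variable {G : SimpleGraph V} {S : Finset V} {m : Finset (Sym2 V)} {a b : V}

theorem IsMatchingOn.exists_adj (hm : IsMatchingOn G S m) {e : Sym2 V} (he : e ∈ m)
    (hb : b ∈ e) : ∃ c ∈ S, G.Adj b c ∧ e = s(b, c) := by
  obtain ⟨c, rfl⟩ := Sym2.mem_iff_exists.mp hb
  exact ⟨c, (hm.1 _ he).2 c (Sym2.mem_mk_right b c), (hm.1 _ he).1, rfl⟩

variable [DecidableEq V]

theorem isMatchingOn_erase_iff :
    IsMatchingOn G (S.erase b) m ↔ IsMatchingOn G S m ∧ ∀ e ∈ m, b ∉ e := by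
  constructor
  · rintro ⟨hedge, hdisj⟩
    exact ⟨⟨fun e he => ⟨(hedge e he).1, fun v hv => mem_of_mem_erase ((hedge e he).2 v hv)⟩,
      hdisj⟩, fun e he hb => notMem_erase b S ((hedge e he).2 b hb)⟩
  · rintro ⟨⟨hedge, hdisj⟩, hb⟩
    refine ⟨fun e he => ⟨(hedge e he).1, fun v hv => mem_erase.mpr ⟨?_, (hedge e he).2 v hv⟩⟩,
      hdisj⟩
    rintro rfl
    exact hb e he hv

theorem isMatchingOn_insert_iff (hab : G.Adj a b) (ha : a ∈ S) (hb : b ∈ S)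
    (he : s(a, b) ∉ m) :
    IsMatchingOn G S (insert s(a, b) m) ↔ IsMatchingOn G (S \ {a, b}) m := by
  have hne : ∀ f ∈ m, s(a, b) ≠ f := fun f hf h => he (h ▸ hf)
  constructor
  · rintro ⟨hedge, hdisj⟩
    refine ⟨fun f hf => ⟨(hedge f (mem_insert_of_mem hf)).1, fun v hv => ?_⟩,
      fun f hf g hg => hdisj f (mem_insert_of_mem hf) g (mem_insert_of_mem hg)⟩
    have hvab : v ∉ s(a, b) := fun h =>
      hdisj _ (mem_insert_self _ _) f (mem_insert_of_mem hf) (hne f hf) v h hv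
    simp only [Sym2.mem_iff, not_or] at hvab
    simp [(hedge f (mem_insert_of_mem hf)).2 v hv, hvab]
  · rintro ⟨hedge, hdisj⟩
    have hsep : ∀ f ∈ m, ∀ v ∈ f, v ∉ s(a, b) := fun f hf v hv => by
      simpa using (mem_sdiff.mp ((hedge f hf).2 v hv)).2
    refine ⟨?_, ?_⟩
    · simp only [forall_mem_insert, SimpleGraph.mem_edgeSet, Sym2.mem_iff]
      refine ⟨⟨hab, by rintro v (rfl | rfl) <;> assumption⟩,
        fun f hf => ⟨(hedge f hf).1, fun v hv => (mem_sdiff.mp ((hedge f hf).2 v hv)).1⟩⟩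
    · intro e he f hf hef v hve hvf
      rcases mem_insert.mp he with rfl | he <;> rcases mem_insert.mp hf with rfl | hf
      · exact hef rfl
      · exact hsep f hf v hvf hve
      · exact hsep e he v hve hvf
      · exact hdisj e he f hf hef v hve hvf

variable (ν : V → ℝ) (ω : Sym2 V → ℝ)

theorem Ham_eq_add_Ham_erase (hb : b ∈ S) (hm : ∀ e ∈ m, b ∉ e) :
    Ham ν ω S m = ν b + Ham ν ω (S.erase b) m := by
  rw [Ham, Ham, ← add_assoc, filter_erase]
  congr 1
  exact (add_sum_erase _ _ (by simp only [mem_filter]; exact ⟨hb, hm⟩)).symm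

theorem Ham_insert_edge (he : s(a, b) ∉ m) :
    Ham ν ω S (insert s(a, b) m) = ω s(a, b) + Ham ν ω (S \ {a, b}) m := by
  rw [Ham, Ham, sum_insert he, add_left_comm]
  congr 2
  refine sum_congr ?_ fun _ _ => rfl
  ext v
  simp [and_assoc]

variable [Fintype V]

theorem Zfun_nonneg : 0 ≤ Zfun G ν ω S :=
  sum_nonneg fun _ _ => (Real.exp_pos _).le

theorem Zfun_empty : Zfun G ν ω ∅ = 1 := by
  have hmatch : univ.filter (fun m : Finset (Sym2 V) => IsMatchingOn G ∅ m) = {∅} := by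
    ext m
    simp only [mem_filter, mem_univ, true_and, mem_singleton]
    refine ⟨fun hm => eq_empty_of_forall_notMem fun e he => ?_, ?_⟩
    · induction e using Sym2.ind with
      | _ x y => exact notMem_empty x ((hm.1 _ he).2 x (Sym2.mem_mk_left x y))
    · rintro rfl
      exact ⟨by simp, by simp⟩
  simp [Zfun, hmatch, Ham]

theorem sum_exp_Ham_uncovered (hb : b ∈ S) :
    ∑ m ∈ univ.filter (fun m => IsMatchingOn G S m ∧ ∀ e ∈ m, b ∉ e), Real.exp (Ham ν ω S m) =
      Real.exp (ν b) * Zfun G ν ω (S.erase b) := by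
  rw [Zfun, mul_sum]
  refine sum_congr (by ext m; simp [isMatchingOn_erase_iff]) fun m hm => ?_
  simp only [mem_filter, mem_univ, true_and] at hm
  rw [Ham_eq_add_Ham_erase ν ω hb (isMatchingOn_erase_iff.mp hm).2, Real.exp_add]

theorem sum_exp_Ham_of_mem (hab : G.Adj a b) (ha : a ∈ S) (hb : b ∈ S) :
    ∑ m ∈ univ.filter (fun m => IsMatchingOn G S m ∧ s(a, b) ∈ m), Real.exp (Ham ν ω S m) =
      Real.exp (ω s(a, b)) * Zfun G ν ω (S \ {a, b}) := by
  have hnotMem : ∀ m, IsMatchingOn G (S \ {a, b}) m → s(a, b) ∉ m := fun m hm he => by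
    simpa using (hm.1 _ he).2 a (Sym2.mem_mk_left a b)
  rw [Zfun, mul_sum]
  refine sum_nbij' (fun m => m.erase s(a, b)) (insert s(a, b)) ?_ ?_ ?_ ?_ ?_
  all_goals simp only [mem_filter, mem_univ, true_and]
  · rintro m ⟨hm, he⟩
    rw [← isMatchingOn_insert_iff hab ha hb (notMem_erase _ _), insert_erase he]
    exact hm
  · intro m hm
    exact ⟨(isMatchingOn_insert_iff hab ha hb (hnotMem m hm)).2 hm, mem_insert_self _ _⟩
  · exact fun m ⟨_, he⟩ => insert_erase he
  · exact fun m hm => erase_insert (hnotMem m hm)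
  · rintro m ⟨-, he⟩
    conv_lhs => rw [← insert_erase he]
    rw [Ham_insert_edge ν ω (notMem_erase _ _), Real.exp_add]

theorem Zfun_eq_of_forall_not_adj (hb : b ∈ S) (hiso : ∀ c ∈ S, ¬ G.Adj b c) :
    Zfun G ν ω S = Real.exp (ν b) * Zfun G ν ω (S.erase b) := by
  rw [← sum_exp_Ham_uncovered ν ω hb, Zfun]
  refine sum_congr ?_ fun _ _ => rfl
  ext m
  simp only [mem_filter, mem_univ, true_and]
  refine ⟨fun hm => ⟨hm, fun e he hbe => ?_⟩, And.left⟩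
  obtain ⟨c, hc, hbc, -⟩ := hm.exists_adj he hbe
  exact hiso c hc hbc

theorem Zfun_eq_of_forall_adj_eq (hab : G.Adj a b) (ha : a ∈ S) (hb : b ∈ S)
    (huniq : ∀ c ∈ S, G.Adj b c → c = a) :
    Zfun G ν ω S = Real.exp (ν b) * Zfun G ν ω (S.erase b) +
      Real.exp (ω s(a, b)) * Zfun G ν ω (S \ {a, b}) := by
  have hcover : ∀ m, IsMatchingOn G S m → (s(a, b) ∉ m ↔ ∀ e ∈ m, b ∉ e) := by
    refine fun m hm => ⟨fun hab' e he hbe => hab' ?_,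
      fun hunc hab' => hunc _ hab' (Sym2.mem_mk_right a b)⟩
    obtain ⟨c, hc, hbc, rfl⟩ := hm.exists_adj he hbe
    rwa [huniq c hc hbc, Sym2.eq_swap] at he
  rw [← sum_exp_Ham_uncovered ν ω hb, ← sum_exp_Ham_of_mem ν ω hab ha hb, Zfun,
    ← sum_filter_not_add_sum_filter _ (fun m => s(a, b) ∈ m), filter_filter, filter_filter]
  congr 1
  refine sum_congr ?_ fun _ _ => rfl
  ext m
  simp only [mem_filter, mem_univ, true_and]
  exact ⟨fun h => ⟨h.1, (hcover m h.1).1 h.2⟩, fun h => ⟨h.1, (hcover m h.1).2 h.2⟩⟩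

end Matching

section Path
open SimpleGraph

variable {n k : ℕ}

def pathPrefix (n k : ℕ) : Finset (Fin n) := {v | (v : ℕ) < k}

@[simp]
theorem mem_pathPrefix {v : Fin n} : v ∈ pathPrefix n k ↔ (v : ℕ) < k := by
  simp [pathPrefix]

theorem pathPrefix_zero : pathPrefix n 0 = ∅ := by
  ext; simp

theorem pathPrefix_self : pathPrefix n n = univ := by
  ext v; simp

theorem pathPrefix_succ_erase (h : k < n) :
    (pathPrefix n (k + 1)).erase ⟨k, h⟩ = pathPrefix n k := by
  ext v; simp [Fin.ext_iff]; omega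

theorem pathPrefix_add_two_sdiff (h : k + 2 ≤ n) :
    pathPrefix n (k + 2) \ {⟨k, by omega⟩, ⟨k + 1, h⟩} = pathPrefix n k := by
  ext v; simp [Fin.ext_iff]; omega

theorem Zfun_pathPrefix_one (ν : Fin n → ℝ) (ω : Sym2 (Fin n) → ℝ) (h : 0 < n) :
    Zfun (pathGraph n) ν ω (pathPrefix n 1) = Real.exp (ν ⟨0, h⟩) := by
  rw [Zfun_eq_of_forall_not_adj ν ω (b := ⟨0, h⟩) (by simp) fun c hc => ?_,
    pathPrefix_succ_erase, pathPrefix_zero, Zfun_empty, mul_one]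
  simp only [mem_pathPrefix, pathGraph_adj] at hc ⊢
  omega

theorem Zfun_pathPrefix_add_two (ν : Fin n → ℝ) (ω : Sym2 (Fin n) → ℝ) (h : k + 2 ≤ n) :
    Zfun (pathGraph n) ν ω (pathPrefix n (k + 2)) =
      Real.exp (ν ⟨k + 1, h⟩) * Zfun (pathGraph n) ν ω (pathPrefix n (k + 1)) +
        Real.exp (ω s(⟨k, by omega⟩, ⟨k + 1, h⟩)) * Zfun (pathGraph n) ν ω (pathPrefix n k) := by
  rw [Zfun_eq_of_forall_adj_eq ν ω (a := ⟨k, by omega⟩) (b := ⟨k + 1, h⟩)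
    (by simp [pathGraph_adj]) (by simp) (by simp) fun c hc hadj => ?_,
    pathPrefix_succ_erase, pathPrefix_add_two_sdiff]
  simp only [mem_pathPrefix, pathGraph_adj] at hc hadj
  ext; simp only; omega

noncomputable def tridiagonalMatrix (ν : Fin n → ℝ) (ω : Sym2 (Fin n) → ℝ) :
    Matrix (Fin n) (Fin n) ℂ := fun i j =>
  if i = j then Complex.I * (Real.exp (ν i) : ℂ)
  else if (pathGraph n).Adj i j then (Real.exp (ω s(i, j) / 2) : ℂ)
  else 0

theorem leadingMinor_tridiagonalMatrix (ν : Fin n → ℝ) (ω : Sym2 (Fin n) → ℝ) (hk : k ≤ n) :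
    (tridiagonalMatrix ν ω).leadingMinor k hk =
      Complex.I ^ k * Zfun (pathGraph n) ν ω (pathPrefix n k) := by
  induction k using Nat.twoStepInduction with
  | zero => simp [Matrix.leadingMinor, pathPrefix_zero, Zfun_empty]
  | one =>
    rw [Zfun_pathPrefix_one ν ω hk]
    simp [Matrix.leadingMinor, tridiagonalMatrix]
    rfl
  | more k ih₀ ih₁ =>
    have hsupp : ∀ i j, i ≠ j → ¬ (pathGraph n).Adj i j → tridiagonalMatrix ν ω i j = 0 :=
      fun i j hij hadj => by simp [tridiagonalMatrix, hij, hadj]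
    have hdiag : tridiagonalMatrix ν ω ⟨k + 1, hk⟩ ⟨k + 1, hk⟩ =
        Complex.I * (Real.exp (ν ⟨k + 1, hk⟩) : ℂ) := if_pos rfl
    have hedge : tridiagonalMatrix ν ω ⟨k + 1, hk⟩ ⟨k, by omega⟩ *
        tridiagonalMatrix ν ω ⟨k, by omega⟩ ⟨k + 1, hk⟩ =
          (Real.exp (ω s(⟨k, by omega⟩, ⟨k + 1, hk⟩)) : ℂ) := by
      simp [tridiagonalMatrix, Fin.ext_iff, pathGraph_adj, Sym2.eq_swap]
      rw [← Complex.exp_add, add_halves]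
    rw [Matrix.leadingMinor_add_two _ hsupp hk, ih₀, ih₁, Zfun_pathPrefix_add_two ν ω hk, hdiag,
      hedge]
    push_cast
    linear_combination (-Complex.exp (ω s(⟨k, by omega⟩, ⟨k + 1, hk⟩)) * Complex.I ^ k *
      (Zfun (pathGraph n) ν ω (pathPrefix n k) : ℂ)) * Complex.I_sq

end Path

/-- The absolute value of the determinant of the tridiagonal matrix with diagonal
entries `i e^{ν k}` and off-diagonal entries `e^{ω (k,k+1) / 2}` equals the matching
partition function of the path graph on `n` vertices. -/
theorem abs_det_tridiagonal_eq_Zfun (n : ℕ) (ν : Fin n → ℝ) (ω : Sym2 (Fin n) → ℝ)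
    (A : Matrix (Fin n) (Fin n) ℂ)
    (hA : A = fun i j =>
      if i = j then Complex.I * (Real.exp (ν i) : ℂ)
      else if (SimpleGraph.pathGraph n).Adj i j then (Real.exp (ω s(i, j) / 2) : ℂ)
      else 0) :
    ‖A.det‖ = Zfun (SimpleGraph.pathGraph n) ν ω Finset.univ := by
  obtain rfl : A = tridiagonalMatrix ν ω := hA
  have hdet := leadingMinor_tridiagonalMatrix ν ω le_rfl
  rw [Matrix.leadingMinor_self, pathPrefix_self] at hdet
  rw [hdet, norm_mul, norm_pow, Complex.norm_I, one_pow, one_mul, Complex.norm_real,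
    Real.norm_of_nonneg (Zfun_nonneg ν ω)]
end
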